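/- Perturbation bound for stationary distributions: if μ and ν are stationary distributions of ergodic row-stochastic matrices P and P', then ‖μ − ν‖_TV ≤ (1/2) Λ₁(Z#) ‖P − P'‖₁, where Z# is the group inverse of I − P and ‖Δ‖₁ = max_i Σ_j |Δ_{ij}|. -/

import Mathlib

open Matrix

/-- The ergodicity coefficient `Λ₁(M) = (1/2) max_{i,j} Σ_k |M_{ik} − M_{jk}|`. -/
noncomputable def ergCoeff {n : Type*} [Fintype n] [Nonempty n] (M : Matrix n n ℝ) : ℝ :=
  (1 / 2) * (Finset.univ ×ˢ Finset.univ).sup'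
    (Finset.univ_nonempty.product Finset.univ_nonempty)
    (fun p => ∑ k, |M p.1 k - M p.2 k|)

/-- The matrix `1`-norm `‖Δ‖₁ = max_i Σ_j |Δ_{ij}|`. -/
noncomputable def matOneNorm {n : Type*} [Fintype n] [Nonempty n] (M : Matrix n n ℝ) : ℝ :=
  Finset.univ.sup' Finset.univ_nonempty (fun i => ∑ j, |M i j|)

/-!
With `w = νᵀ (P − P')`, the assumed identity reads `μᵀ − νᵀ = wᵀ Z#`. Since `P` and `P'` are
both stochastic, `w` sums to zero, and `‖w‖₁ ≤ ‖P − P'‖₁` because `ν` is a probability vector.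
For a zero-sum `w` and the sign vector `σ` of `wᵀ Z`, `‖wᵀ Z‖₁ = wᵀ (Z σ)`; the entries of
`Z σ` differ pairwise by at most `2 Λ₁(Z)`, and pairing a zero-sum `w` with a vector whose
entries differ by at most `D` gives at most `‖w‖₁ D / 2`.
-/

lemma sum_vecMul_eq_zero {m n : Type*} [Fintype m] [Fintype n] (v : m → ℝ) {A : Matrix m n ℝ}
    (hA : ∀ i, ∑ j, A i j = 0) : ∑ j, (v ᵥ* A) j = 0 := by
  simp only [vecMul, dotProduct]
  rw [Finset.sum_comm]
  simp [← Finset.mul_sum, hA]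

section

variable {n : Type*} [Fintype n] [Nonempty n]

lemma sum_abs_sub_le_two_mul_ergCoeff (M : Matrix n n ℝ) (i j : n) :
    ∑ k, |M i k - M j k| ≤ 2 * ergCoeff M := by
  have h := Finset.le_sup' (s := Finset.univ ×ˢ Finset.univ)
    (fun p : n × n => ∑ k, |M p.1 k - M p.2 k|) (b := (i, j)) (by simp)
  rw [ergCoeff]
  linarith

lemma ergCoeff_nonneg (M : Matrix n n ℝ) : 0 ≤ ergCoeff M := by
  obtain ⟨i⟩ := ‹Nonempty n›
  have h := sum_abs_sub_le_two_mul_ergCoeff M i i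
  simp only [sub_self, abs_zero, Finset.sum_const_zero] at h
  linarith

lemma sum_abs_le_matOneNorm (M : Matrix n n ℝ) (i : n) : ∑ j, |M i j| ≤ matOneNorm M :=
  Finset.le_sup' (fun i => ∑ j, |M i j|) (Finset.mem_univ i)

lemma mulVec_apply_sub_mulVec_apply_le (M : Matrix n n ℝ) {σ : n → ℝ}
    (hσ : ∀ x, |σ x| ≤ 1) (i j : n) :
    (M *ᵥ σ) i - (M *ᵥ σ) j ≤ 2 * ergCoeff M := by
  calc (M *ᵥ σ) i - (M *ᵥ σ) j = ∑ k, (M i k - M j k) * σ k := by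
        simp only [mulVec, dotProduct, sub_mul, Finset.sum_sub_distrib]
    _ ≤ ∑ k, |M i k - M j k| := by
        refine Finset.sum_le_sum fun k _ => (le_abs_self _).trans ?_
        rw [abs_mul]
        exact mul_le_of_le_one_right (abs_nonneg _) (hσ k)
    _ ≤ 2 * ergCoeff M := sum_abs_sub_le_two_mul_ergCoeff M i j

lemma abs_dotProduct_le_of_sum_eq_zero {w : n → ℝ} (hw : ∑ k, w k = 0) (f : n → ℝ) {D : ℝ}
    (hf : ∀ i j, f i - f j ≤ D) :
    |w ⬝ᵥ f| ≤ (∑ k, |w k|) / 2 * D := by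
  obtain ⟨i, -, hi⟩ := Finset.exists_max_image Finset.univ f Finset.univ_nonempty
  obtain ⟨j, -, hj⟩ := Finset.exists_min_image Finset.univ f Finset.univ_nonempty
  -- `w` does not see constant shifts of `f`, so center `f` at the midpoint of its range
  have hc : ∀ k, |f k - (f i + f j) / 2| ≤ D / 2 := fun k => by
    have := hf i j
    have := hi k (Finset.mem_univ k)
    have := hj k (Finset.mem_univ k)
    rw [abs_le]
    constructor <;> linarith
  have hshift : w ⬝ᵥ f = ∑ k, w k * (f k - (f i + f j) / 2) := by
    simp only [dotProduct, mul_sub, Finset.sum_sub_distrib, ← Finset.sum_mul, hw, zero_mul,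
      sub_zero]
  calc |w ⬝ᵥ f| ≤ ∑ k, |w k| * |f k - (f i + f j) / 2| := by
        rw [hshift]
        exact (Finset.abs_sum_le_sum_abs _ _).trans_eq (by simp only [abs_mul])
    _ ≤ ∑ k, |w k| * (D / 2) :=
        Finset.sum_le_sum fun k _ => mul_le_mul_of_nonneg_left (hc k) (abs_nonneg _)
    _ = (∑ k, |w k|) / 2 * D := by rw [← Finset.sum_mul]; ring

lemma sum_abs_vecMul_le_of_sum_eq_zero {w : n → ℝ} (hw : ∑ k, w k = 0) (Z : Matrix n n ℝ) :
    ∑ x, |(w ᵥ* Z) x| ≤ (∑ k, |w k|) * ergCoeff Z := by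
  set σ : n → ℝ := fun x => SignType.sign ((w ᵥ* Z) x)
  have hσ : ∀ x, |σ x| ≤ 1 := fun x => by
    obtain h | h | h := SignType.trichotomy (SignType.sign ((w ᵥ* Z) x)) <;> simp [σ, h]
  calc ∑ x, |(w ᵥ* Z) x| = w ⬝ᵥ (Z *ᵥ σ) := by
        rw [dotProduct_mulVec]
        simp only [dotProduct, σ, self_mul_sign]
    _ ≤ |w ⬝ᵥ (Z *ᵥ σ)| := le_abs_self _
    _ ≤ (∑ k, |w k|) / 2 * (2 * ergCoeff Z) :=
        abs_dotProduct_le_of_sum_eq_zero hw _ (mulVec_apply_sub_mulVec_apply_le Z hσ)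
    _ = (∑ k, |w k|) * ergCoeff Z := by ring

lemma sum_abs_vecMul_le_matOneNorm (v : n → ℝ) (A : Matrix n n ℝ) :
    ∑ j, |(v ᵥ* A) j| ≤ (∑ i, |v i|) * matOneNorm A := by
  calc ∑ j, |(v ᵥ* A) j| ≤ ∑ j, ∑ i, |v i| * |A i j| := by
        refine Finset.sum_le_sum fun j _ => ?_
        simp only [vecMul, dotProduct, ← abs_mul]
        exact Finset.abs_sum_le_sum_abs _ _
    _ = ∑ i, |v i| * ∑ j, |A i j| := by
        rw [Finset.sum_comm]
        simp only [Finset.mul_sum]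
    _ ≤ ∑ i, |v i| * matOneNorm A :=
        Finset.sum_le_sum fun i _ =>
          mul_le_mul_of_nonneg_left (sum_abs_le_matOneNorm A i) (abs_nonneg _)
    _ = (∑ i, |v i|) * matOneNorm A := (Finset.sum_mul ..).symm

end

theorem stationary_perturbation_bound_general {n : Type*} [Fintype n] [Nonempty n] [DecidableEq n]
    (P P' : Matrix n n ℝ) (μ ν : n → ℝ)
    (hP1 : ∀ i, ∑ j, P i j = 1) (hP'1 : ∀ i, ∑ j, P' i j = 1)
    (hν0 : ∀ i, 0 ≤ ν i) (hν1 : ∑ i, ν i = 1)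
    (hid : ν - μ = ν ᵥ* ((P' - P) *
      ((1 - P + Matrix.of fun _ j => μ j)⁻¹ - Matrix.of fun _ j => μ j))) :
    (1 / 2) * ∑ x, |μ x - ν x|
      ≤ (1 / 2) * ergCoeff ((1 - P + Matrix.of fun _ j => μ j)⁻¹ - Matrix.of fun _ j => μ j)
          * matOneNorm (P - P') := by
  set Z := (1 - P + Matrix.of fun _ j => μ j)⁻¹ - Matrix.of fun _ j => μ j
  set w := ν ᵥ* (P - P')
  have hdiff : μ - ν = w ᵥ* Z := by
    rw [← neg_sub, hid, vecMul_vecMul, ← vecMul_neg, ← Matrix.neg_mul, neg_sub]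
  have hw : ∑ k, w k = 0 :=
    sum_vecMul_eq_zero ν fun i => by simp [Finset.sum_sub_distrib, hP1 i, hP'1 i]
  have hν_abs : ∑ i, |ν i| = 1 := by simp_rw [abs_of_nonneg (hν0 _)]; exact hν1
  have hw_norm : ∑ k, |w k| ≤ matOneNorm (P - P') := by
    simpa [hν_abs] using sum_abs_vecMul_le_matOneNorm ν (P - P')
  calc (1 / 2) * ∑ x, |μ x - ν x| = (1 / 2) * ∑ x, |(w ᵥ* Z) x| := by
        simp only [← hdiff, Pi.sub_apply]
    _ ≤ (1 / 2) * ((∑ k, |w k|) * ergCoeff Z) := by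
        gcongr; exact sum_abs_vecMul_le_of_sum_eq_zero hw Z
    _ ≤ (1 / 2) * ergCoeff Z * matOneNorm (P - P') := by
        nlinarith [ergCoeff_nonneg Z]

/-- Perturbation bound for stationary distributions: if `μ` and `ν` are stationary
distributions of row-stochastic matrices `P` and `P'`, then
`‖μ − ν‖_TV ≤ (1/2) Λ₁(Z#) ‖P − P'‖₁`, where `Z# = (I − P + 1·μᵀ)⁻¹ − 1·μᵀ` is the group
inverse of `I − P` (assumed to exist and to satisfy `νᵀ − μᵀ = νᵀ (P' − P) Z#`). -/
theorem stationary_perturbation_bound {n : Type*} [Fintype n] [Nonempty n] [DecidableEq n]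
    (P P' : Matrix n n ℝ) (μ ν : n → ℝ)
    (hP0 : ∀ i j, 0 ≤ P i j) (hP1 : ∀ i, ∑ j, P i j = 1)
    (hP'0 : ∀ i j, 0 ≤ P' i j) (hP'1 : ∀ i, ∑ j, P' i j = 1)
    (hμ0 : ∀ i, 0 ≤ μ i) (hμ1 : ∑ i, μ i = 1)
    (hν0 : ∀ i, 0 ≤ ν i) (hν1 : ∑ i, ν i = 1)
    (hμstat : μ ᵥ* P = μ) (hνstat : ν ᵥ* P' = ν)
    (hA : IsUnit (1 - P + Matrix.of fun _ j => μ j).det)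
    (hid : ν - μ = ν ᵥ* ((P' - P) *
      ((1 - P + Matrix.of fun _ j => μ j)⁻¹ - Matrix.of fun _ j => μ j))) :
    (1 / 2) * ∑ x, |μ x - ν x|
      ≤ (1 / 2) * ergCoeff ((1 - P + Matrix.of fun _ j => μ j)⁻¹ - Matrix.of fun _ j => μ j)
          * matOneNorm (P - P') :=
  stationary_perturbation_bound_general P P' μ ν hP1 hP'1 hν0 hν1 hid
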